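/- For every n ≥ 1 there is a constant C_n depending only on n such that for every Borel set Σ ⊆ ℝ^{n+1} (with μ_Σ the n-dimensional Hausdorff measure restricted to Σ), every x₀ ∈ ℝ^{n+1}, and every t₀ > 0, one has (4πt₀)^{−n/2} ∫ |x|² e^{−|x−x₀|²/(4t₀)} dμ_Σ(x) ≤ 2·λ(Σ)·( C_n·t₀ + |x₀|² ). -/

import Mathlib

/-! Split `‖x‖² ≤ 2‖x - x₀‖² + 2‖x₀‖²`. The `‖x₀‖²` part is `2‖x₀‖² F_{x₀,t₀}(Σ)`. For the other
part, `r² e^{-r²/4t} ≤ (8t/e) e^{-r²/8t}` trades the polynomial weight for the Gaussian at the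
doubled time `2t₀`, whose Gaussian integral is `2^{n/2} F_{x₀,2t₀}(Σ)`. Both are bounded by the
entropy, giving `C_n = 8 · 2^{n/2} / e`. -/

noncomputable section
open Real MeasureTheory
open scoped ENNReal

/-- The Gaussian surface integral `F_{x₀,t₀}(Σ)`, computed against the `n`-dimensional
Hausdorff measure restricted to a set `S ⊆ ℝ^{n+1}`, with values in `[0,∞]`. -/
def gaussianF (n : ℕ) (S : Set (EuclideanSpace ℝ (Fin (n+1))))
    (x₀ : EuclideanSpace ℝ (Fin (n+1))) (t₀ : ℝ) : ℝ≥0∞ :=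
  ENNReal.ofReal ((4 * π * t₀) ^ (-(n:ℝ)/2)) *
    ∫⁻ x in S, ENNReal.ofReal (Real.exp (-‖x - x₀‖ ^ 2 / (4 * t₀))) ∂μH[(n:ℝ)]

/-- The entropy `λ(Σ) = sup_{x₀, t₀>0} F_{x₀,t₀}(Σ)`. -/
def entropy (n : ℕ) (S : Set (EuclideanSpace ℝ (Fin (n+1)))) : ℝ≥0∞ :=
  ⨆ (x₀ : EuclideanSpace ℝ (Fin (n+1))) (t₀ : ℝ) (_ : 0 < t₀), gaussianF n S x₀ t₀

theorem sq_mul_exp_neg_div_le {t : ℝ} (ht : 0 < t) (r : ℝ) :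
    r ^ 2 * exp (-r ^ 2 / (4 * t)) ≤ 8 * t * exp (-1) * exp (-r ^ 2 / (8 * t)) := by
  set u := r ^ 2 / (8 * t)
  have hr : r ^ 2 = 8 * t * u := by simp only [u]; field_simp
  have hexp : exp (-r ^ 2 / (4 * t)) = exp (-u) * exp (-u) := by
    rw [← exp_add, hr]; congr 1; field_simp; ring
  have hexp' : exp (-r ^ 2 / (8 * t)) = exp (-u) := by rw [neg_div]
  rw [hexp, hexp', hr]
  calc 8 * t * u * (exp (-u) * exp (-u)) = 8 * t * (u * exp (-u)) * exp (-u) := by ring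
    _ ≤ 8 * t * exp (-1) * exp (-u) := by gcongr; exact mul_exp_neg_le_exp_neg_one u

theorem sq_norm_mul_exp_le {E : Type*} [SeminormedAddCommGroup E] {t : ℝ} (ht : 0 < t)
    (x x₀ : E) :
    ‖x‖ ^ 2 * exp (-‖x - x₀‖ ^ 2 / (4 * t)) ≤
      16 * t * exp (-1) * exp (-‖x - x₀‖ ^ 2 / (8 * t)) +
        2 * ‖x₀‖ ^ 2 * exp (-‖x - x₀‖ ^ 2 / (4 * t)) := by
  have hsq : ‖x‖ ^ 2 ≤ 2 * ‖x - x₀‖ ^ 2 + 2 * ‖x₀‖ ^ 2 :=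
    calc ‖x‖ ^ 2 ≤ (‖x - x₀‖ + ‖x₀‖) ^ 2 := by
          gcongr; simpa using norm_add_le (x - x₀) x₀
      _ ≤ _ := by linarith [add_sq_le (a := ‖x - x₀‖) (b := ‖x₀‖)]
  have := sq_mul_exp_neg_div_le ht ‖x - x₀‖
  calc ‖x‖ ^ 2 * exp (-‖x - x₀‖ ^ 2 / (4 * t))
      ≤ (2 * ‖x - x₀‖ ^ 2 + 2 * ‖x₀‖ ^ 2) * exp (-‖x - x₀‖ ^ 2 / (4 * t)) := by gcongr
    _ ≤ _ := by linarith

theorem lintegral_sq_norm_mul_exp_le {E : Type*} [SeminormedAddCommGroup E] [MeasurableSpace E]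
    [OpensMeasurableSpace E] (μ : Measure E) {t : ℝ} (ht : 0 < t) (x₀ : E) :
    ∫⁻ x, ENNReal.ofReal (‖x‖ ^ 2 * exp (-‖x - x₀‖ ^ 2 / (4 * t))) ∂μ ≤
      ENNReal.ofReal (16 * t * exp (-1)) *
          ∫⁻ x, ENNReal.ofReal (exp (-‖x - x₀‖ ^ 2 / (8 * t))) ∂μ +
        ENNReal.ofReal (2 * ‖x₀‖ ^ 2) *
          ∫⁻ x, ENNReal.ofReal (exp (-‖x - x₀‖ ^ 2 / (4 * t))) ∂μ := by
  have hmeas : Measurable fun x : E => ENNReal.ofReal (exp (-‖x - x₀‖ ^ 2 / (8 * t))) :=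
    ENNReal.measurable_ofReal.comp (by fun_prop : Continuous _).measurable
  rw [← lintegral_const_mul _ hmeas, ← lintegral_const_mul' _ _ ENNReal.ofReal_ne_top,
    ← lintegral_add_left (hmeas.const_mul _)]
  refine lintegral_mono fun x => ?_
  rw [← ENNReal.ofReal_mul (by positivity), ← ENNReal.ofReal_mul (by positivity),
    ← ENNReal.ofReal_add (by positivity) (by positivity)]
  exact ENNReal.ofReal_le_ofReal (sq_norm_mul_exp_le ht x x₀)

theorem gaussianF_le_entropy (n : ℕ) (S : Set (EuclideanSpace ℝ (Fin (n+1))))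
    (x₀ : EuclideanSpace ℝ (Fin (n+1))) {t : ℝ} (ht : 0 < t) :
    gaussianF n S x₀ t ≤ entropy n S :=
  le_iSup₂_of_le x₀ t (le_iSup_of_le ht le_rfl)

theorem ofReal_mul_lintegral_exp_eq_gaussianF_two_mul (n : ℕ)
    (S : Set (EuclideanSpace ℝ (Fin (n+1)))) (x₀ : EuclideanSpace ℝ (Fin (n+1))) {t : ℝ}
    (ht : 0 ≤ t) :
    ENNReal.ofReal ((4 * π * t) ^ (-(n:ℝ)/2)) *
        ∫⁻ x in S, ENNReal.ofReal (exp (-‖x - x₀‖ ^ 2 / (8 * t))) ∂μH[(n:ℝ)] =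
      ENNReal.ofReal (2 ^ ((n:ℝ)/2)) * gaussianF n S x₀ (2 * t) := by
  have hscale : (4 * π * t) ^ (-(n:ℝ)/2) = 2 ^ ((n:ℝ)/2) * (4 * π * (2 * t)) ^ (-(n:ℝ)/2) := by
    rw [show 4 * π * t = 2⁻¹ * (4 * π * (2 * t)) by ring,
      mul_rpow (by norm_num) (by positivity), neg_div, rpow_neg (by norm_num),
      inv_rpow (by norm_num), inv_inv]
  rw [gaussianF, show 4 * (2 * t) = 8 * t by ring, ← mul_assoc,
    ← ENNReal.ofReal_mul (by positivity), ← hscale]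

theorem stmt11_general (n : ℕ) :
    ∃ C : ℝ, ∀ S : Set (EuclideanSpace ℝ (Fin (n+1))), MeasurableSet S →
      ∀ x₀ : EuclideanSpace ℝ (Fin (n+1)), ∀ t₀ : ℝ, 0 < t₀ →
        ENNReal.ofReal ((4 * π * t₀) ^ (-(n:ℝ)/2)) *
            ∫⁻ x in S, ENNReal.ofReal (‖x‖ ^ 2 * Real.exp (-‖x - x₀‖ ^ 2 / (4 * t₀)))
              ∂μH[(n:ℝ)]
          ≤ 2 * entropy n S * ENNReal.ofReal (C * t₀ + ‖x₀‖ ^ 2) := by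
  set C : ℝ := 8 * 2 ^ ((n:ℝ)/2) * exp (-1)
  refine ⟨C, fun S _ x₀ t ht => ?_⟩
  set a := ENNReal.ofReal ((4 * π * t) ^ (-(n:ℝ)/2))
  set L := entropy n S
  have hcoeff : ENNReal.ofReal (16 * t * exp (-1)) * (ENNReal.ofReal (2 ^ ((n:ℝ)/2)) * L) +
      ENNReal.ofReal (2 * ‖x₀‖ ^ 2) * L = 2 * L * ENNReal.ofReal (C * t + ‖x₀‖ ^ 2) := by
    rw [← mul_assoc, ← ENNReal.ofReal_mul (by positivity), ← add_mul,
      ← ENNReal.ofReal_add (by positivity) (by positivity),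
      show 16 * t * exp (-1) * 2 ^ ((n:ℝ)/2) + 2 * ‖x₀‖ ^ 2 = 2 * (C * t + ‖x₀‖ ^ 2) by ring,
      ENNReal.ofReal_mul zero_le_two, ENNReal.ofReal_ofNat]
    ring
  calc a * ∫⁻ x in S, ENNReal.ofReal (‖x‖ ^ 2 * exp (-‖x - x₀‖ ^ 2 / (4 * t))) ∂μH[(n:ℝ)]
      ≤ a * (ENNReal.ofReal (16 * t * exp (-1)) *
              ∫⁻ x in S, ENNReal.ofReal (exp (-‖x - x₀‖ ^ 2 / (8 * t))) ∂μH[(n:ℝ)] +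
            ENNReal.ofReal (2 * ‖x₀‖ ^ 2) *
              ∫⁻ x in S, ENNReal.ofReal (exp (-‖x - x₀‖ ^ 2 / (4 * t))) ∂μH[(n:ℝ)]) := by
        gcongr; exact lintegral_sq_norm_mul_exp_le _ ht x₀
    _ = ENNReal.ofReal (16 * t * exp (-1)) *
            (ENNReal.ofReal (2 ^ ((n:ℝ)/2)) * gaussianF n S x₀ (2 * t)) +
          ENNReal.ofReal (2 * ‖x₀‖ ^ 2) * gaussianF n S x₀ t := by
        rw [← ofReal_mul_lintegral_exp_eq_gaussianF_two_mul n S x₀ ht.le, gaussianF]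
        ring
    _ ≤ ENNReal.ofReal (16 * t * exp (-1)) * (ENNReal.ofReal (2 ^ ((n:ℝ)/2)) * L) +
          ENNReal.ofReal (2 * ‖x₀‖ ^ 2) * L := by
        gcongr <;> exact gaussianF_le_entropy n S x₀ (by positivity)
    _ = 2 * L * ENNReal.ofReal (C * t + ‖x₀‖ ^ 2) := hcoeff

/-- The weighted second-moment bound: for every `n ≥ 1` there is a
constant `C_n` so that for every Borel `Σ ⊆ ℝ^{n+1}`, `x₀`, and `t₀ > 0`,
`(4πt₀)^{−n/2} ∫ |x|² e^{−|x−x₀|²/4t₀} dμ_Σ ≤ 2 λ(Σ) (C_n t₀ + |x₀|²)`. -/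
theorem stmt11 (n : ℕ) (hn : 1 ≤ n) :
    ∃ C : ℝ, ∀ S : Set (EuclideanSpace ℝ (Fin (n+1))), MeasurableSet S →
      ∀ x₀ : EuclideanSpace ℝ (Fin (n+1)), ∀ t₀ : ℝ, 0 < t₀ →
        ENNReal.ofReal ((4 * π * t₀) ^ (-(n:ℝ)/2)) *
            ∫⁻ x in S, ENNReal.ofReal (‖x‖ ^ 2 * Real.exp (-‖x - x₀‖ ^ 2 / (4 * t₀)))
              ∂μH[(n:ℝ)]
          ≤ 2 * entropy n S * ENNReal.ofReal (C * t₀ + ‖x₀‖ ^ 2) :=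
  stmt11_general n
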